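/- Let (W,S) be a Coxeter system, X, Y ⊆ S, and w ∈ W an element that is (X,Y)-reduced (of minimal length in W_X·w·W_Y). Then w·W_Y·w⁻¹ ∩ W_X is a standard parabolic subgroup: there exist X₁ ⊆ X and Y₁ ⊆ Y with w·Y₁·w⁻¹ = (w·Y·w⁻¹) ∩ X = X₁ (as subsets of W), and w·W_Y·w⁻¹ ∩ W_X = W_{X₁} = w·W_{Y₁}·w⁻¹. -/

import Mathlib

/-- The standard parabolic subgroup of a Coxeter system generated by the simple reflections
indexed by `X`. -/
def CoxeterSystem.standardParabolic {B W : Type*} [Group W] {M : CoxeterMatrix B}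
    (cs : CoxeterSystem M W) (X : Set B) : Subgroup W :=
  Subgroup.closure (cs.simple '' X)

/-!
Kilmoyer's argument. Tits' representation of `W` on `W × ZMod 2` shows that the parity of the
number of occurrences of a reflection `t` in the right inversion sequence of a word depends only on
the element the word represents; this gives the strong exchange condition. By exchange, a minimal
element `w` of `W_X w W_Y` satisfies `ℓ (v w) = ℓ v + ℓ w` and `ℓ (w u) = ℓ w + ℓ u` for
`v ∈ W_X`, `u ∈ W_Y`. Let `u = u' s_y` with `ℓ u' < ℓ u` and `v = w u w⁻¹ ∈ W_X`. Then `s_y` is a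
right descent of `v w = w u`; exchanging it in a word for `v` in `X` followed by a reduced word for
`w` cannot delete a letter of `w` (as `ℓ (w s_y) > ℓ w`), so `w s_y w⁻¹ ∈ W_X`. Additivity on both
sides forces `ℓ (w s_y w⁻¹) = 1`, i.e. `w s_y w⁻¹ = s_x` with `x ∈ X`; since `v = (w u' w⁻¹) s_x`,
induction on `ℓ u` gives `v ∈ W_{X₁}`.
-/

namespace CoxeterSystem

open List
open scoped Classical

variable {B W : Type*} [Group W] {M : CoxeterMatrix B} (cs : CoxeterSystem M W)

local prefix:100 "s " => cs.simple
local prefix:100 "π " => cs.wordProd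
local prefix:100 "ℓ " => cs.length
local prefix:100 "ris " => cs.rightInvSeq
local prefix:100 "lis " => cs.leftInvSeq

theorem alternatingWord_two_mul_add_two (i i' : B) (m : ℕ) :
    alternatingWord i i' (2 * m + 2) = i :: i' :: alternatingWord i i' (2 * m) := by
  rw [alternatingWord_succ', alternatingWord_succ']
  simp

theorem prod_map_alternatingWord_two_mul {G : Type*} [Monoid G] (f : B → G) (i i' : B) (m : ℕ) :
    ((alternatingWord i i' (2 * m)).map f).prod = (f i * f i') ^ m := by
  induction m with
  | zero => simp [alternatingWord]
  | succ m ih =>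
    rw [mul_add_one, alternatingWord_two_mul_add_two, map_cons, map_cons, prod_cons, prod_cons,
      ih, pow_succ', mul_assoc]

theorem reverse_alternatingWord_two_mul (i i' : B) (m : ℕ) :
    (alternatingWord i i' (2 * m)).reverse = alternatingWord i' i (2 * m) := by
  induction m with
  | zero => simp [alternatingWord]
  | succ m ih =>
    rw [mul_add_one, alternatingWord_two_mul_add_two, reverse_cons, reverse_cons, ih,
      alternatingWord_succ, alternatingWord_succ]
    simp

/-- Along the braid word, the right inversion sequence runs twice through the reflections of the
dihedral subgroup generated by `s i` and `s i'`. -/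
theorem even_count_rightInvSeq_alternatingWord (i i' : B) (t : W) :
    Even ((ris (alternatingWord i i' (2 * M i i'))).count t) := by
  rw [← reverse_alternatingWord_two_mul, rightInvSeq_reverse, count_reverse]
  have hperiodic : (lis (alternatingWord i' i (2 * M i i'))).drop (M i i') =
      (lis (alternatingWord i' i (2 * M i i'))).take (M i i') := by
    refine List.ext_getElem (by simp [two_mul]) fun k hk₁ hk₂ => ?_
    simp only [getElem_drop, getElem_take]
    rw [getElem_leftInvSeq_alternatingWord, getElem_leftInvSeq_alternatingWord,
      prod_alternatingWord_eq_mul_pow, prod_alternatingWord_eq_mul_pow]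
    · have hdiv (n : ℕ) : (2 * n + 1) / 2 = n := by omega
      simp only [hdiv, pow_add, simple_mul_simple_pow, one_mul, Nat.even_add_one, even_two_mul]
    all_goals
      simp_all only [length_drop, length_take, length_leftInvSeq, length_alternatingWord]
      omega
  rw [← take_append_drop (M i i') (lis _), count_append, hperiodic]
  exact ⟨_, rfl⟩

theorem simple_mul_mul_simple_eq_simple_iff (i : B) (t : W) : s i * t * s i = s i ↔ t = s i := by
  constructor
  · intro h
    simpa [mul_assoc] using congrArg (fun x => s i * x * s i) h
  · rintro rfl
    simp

noncomputable def parityPerm (i : B) : Equiv.Perm (W × ZMod 2) :=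
  Function.Involutive.toPerm (fun p => (s i * p.1 * s i, p.2 + if p.1 = s i then 1 else 0)) <| by
    rintro ⟨t, ε⟩
    simp only [simple_mul_mul_simple_eq_simple_iff, Prod.mk.injEq, add_assoc]
    refine ⟨by simp [mul_assoc], ?_⟩
    split_ifs <;> simp [CharTwo.add_self_eq_zero]

theorem parityPerm_apply (i : B) (t : W) (ε : ZMod 2) :
    cs.parityPerm i (t, ε) = (s i * t * s i, ε + if t = s i then 1 else 0) := rfl

theorem prod_map_parityPerm_apply (ω : List B) (t : W) (ε : ZMod 2) :
    (ω.map cs.parityPerm).prod (t, ε) = (π ω * t * (π ω)⁻¹, ε + (ris ω).count t) := by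
  induction ω generalizing ε with
  | nil => simp
  | cons i ω ih =>
    have hcond : π ω * t * (π ω)⁻¹ = s i ↔ (π ω)⁻¹ * s i * π ω = t := by
      rw [mul_inv_eq_iff_eq_mul, eq_comm, ← inv_mul_eq_iff_eq_mul, mul_assoc]
    rw [map_cons, prod_cons, Equiv.Perm.mul_apply, ih, parityPerm_apply, wordProd_cons,
      rightInvSeq, count_cons, if_congr hcond rfl rfl, Prod.mk.injEq]
    refine ⟨by simp [mul_assoc], ?_⟩
    simp only [beq_iff_eq]
    split_ifs <;> simp [add_assoc]

theorem isLiftable_parityPerm : M.IsLiftable cs.parityPerm := by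
  intro i i'
  ext1 ⟨t, ε⟩
  rw [← prod_map_alternatingWord_two_mul, prod_map_parityPerm_apply, wordProd,
    prod_map_alternatingWord_two_mul, simple_mul_simple_pow,
    (ZMod.natCast_eq_zero_iff_even).mpr (cs.even_count_rightInvSeq_alternatingWord i i' t)]
  simp

noncomputable def parityRep : W →* Equiv.Perm (W × ZMod 2) :=
  cs.lift ⟨cs.parityPerm, cs.isLiftable_parityPerm⟩

theorem parityRep_wordProd (ω : List B) : cs.parityRep (π ω) = (ω.map cs.parityPerm).prod := by
  rw [wordProd, map_list_prod, List.map_map]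
  congr 2
  ext1 i
  exact cs.lift_apply_simple cs.isLiftable_parityPerm i

/-- The parity of the number of occurrences of `t` in the right inversion sequence of any word
for `w`. -/
noncomputable def inversionParity (w t : W) : ZMod 2 := (cs.parityRep w (t, 0)).2

theorem inversionParity_wordProd (ω : List B) (t : W) :
    cs.inversionParity (π ω) t = (ris ω).count t := by
  simp [inversionParity, parityRep_wordProd, prod_map_parityPerm_apply]

theorem parityRep_apply (w t : W) (ε : ZMod 2) :
    cs.parityRep w (t, ε) = (w * t * w⁻¹, ε + cs.inversionParity w t) := by
  obtain ⟨ω, rfl⟩ := cs.wordProd_surjective w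
  rw [parityRep_wordProd, prod_map_parityPerm_apply, inversionParity_wordProd]

theorem inversionParity_mul (w w' t : W) :
    cs.inversionParity (w * w') t =
      cs.inversionParity w' t + cs.inversionParity w (w' * t * w'⁻¹) := by
  have h : cs.parityRep (w * w') (t, 0) = cs.parityRep w (cs.parityRep w' (t, 0)) := by
    rw [map_mul, Equiv.Perm.mul_apply]
  rw [parityRep_apply, parityRep_apply, parityRep_apply, Prod.mk.injEq] at h
  simpa using h.2

theorem inversionParity_one (t : W) : cs.inversionParity 1 t = 0 := by
  simp [inversionParity]

theorem inversionParity_conj_self (u t : W) :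
    cs.inversionParity (u * t * u⁻¹) (u * t * u⁻¹) = cs.inversionParity t t := by
  have hcancel : cs.inversionParity u⁻¹ (u * t * u⁻¹) + cs.inversionParity u t = 0 := by
    rw [← inversionParity_one cs (u * t * u⁻¹), ← mul_inv_cancel u, inversionParity_mul]
    group
  have hu : u⁻¹ * (u * t * u⁻¹) * u⁻¹⁻¹ = t := by group
  have ht : t * t * t⁻¹ = t := by group
  rw [inversionParity_mul, hu, inversionParity_mul, ht]
  linear_combination hcancel

theorem inversionParity_self_of_isReflection {t : W} (ht : cs.IsReflection t) :
    cs.inversionParity t t = 1 := by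
  obtain ⟨u, i, rfl⟩ := ht
  rw [inversionParity_conj_self, ← wordProd_singleton, inversionParity_wordProd]
  simp [rightInvSeq]

theorem inversionParity_eq_zero_of_length_le {w t : W} (h : ℓ w ≤ ℓ (w * t)) :
    cs.inversionParity w t = 0 := by
  obtain ⟨ω, hω, rfl⟩ := cs.exists_isReduced w
  rw [inversionParity_wordProd, count_eq_zero_of_not_mem fun ht =>
    (cs.isRightInversion_of_mem_rightInvSeq hω ht).2.not_ge h, Nat.cast_zero]

theorem inversionParity_eq_one_of_isRightInversion {w t : W} (h : cs.IsRightInversion w t) :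
    cs.inversionParity w t = 1 := by
  have hw : w * t * t = w := by rw [mul_assoc, h.1.mul_self, mul_one]
  have ht : t * t * t⁻¹ = t := by group
  have hzero : cs.inversionParity (w * t) t = 0 :=
    cs.inversionParity_eq_zero_of_length_le (by rw [hw]; exact h.2.le)
  have := inversionParity_mul cs (w * t) t t
  rwa [hw, ht, hzero, add_zero, inversionParity_self_of_isReflection cs h.1] at this

/-- The strong exchange condition. -/
theorem mem_rightInvSeq_of_isRightInversion {ω : List B} {t : W}
    (ht : cs.IsRightInversion (π ω) t) : t ∈ ris ω := by
  by_contra hmem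
  have h := cs.inversionParity_eq_one_of_isRightInversion ht
  rw [inversionParity_wordProd, count_eq_zero_of_not_mem hmem] at h
  exact zero_ne_one h

theorem exists_wordProd_mul_eq_eraseIdx {ω : List B} {t : W}
    (ht : cs.IsRightInversion (π ω) t) : ∃ j < ω.length, π ω * t = π (ω.eraseIdx j) := by
  obtain ⟨j, hj, rfl⟩ := List.mem_iff_getElem.mp (cs.mem_rightInvSeq_of_isRightInversion ht)
  rw [length_rightInvSeq] at hj
  refine ⟨j, hj, ?_⟩
  rw [← wordProd_mul_getD_rightInvSeq, getD_eq_getElem]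

theorem length_wordProd_eraseIdx_lt {ω : List B} {j : ℕ} (hj : j < ω.length) :
    ℓ (π (ω.eraseIdx j)) < ω.length :=
  (cs.length_wordProd_le _).trans_lt (by rw [length_eraseIdx_of_lt hj]; omega)

theorem exists_eraseIdx_of_isRightInversion_wordProd_mul {κ υ : List B} {t : W}
    (ht : cs.IsRightInversion (π κ * π υ) t) :
    (∃ j < κ.length, π κ * (π υ * t * (π υ)⁻¹) = π (κ.eraseIdx j)) ∨
      ∃ j < υ.length, π υ * t = π (υ.eraseIdx j) := by
  rw [← wordProd_append] at ht
  obtain ⟨j, hj, heq⟩ := cs.exists_wordProd_mul_eq_eraseIdx ht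
  rcases lt_or_ge j κ.length with hjκ | hjκ
  · rw [eraseIdx_append_of_lt_length hjκ, wordProd_append, wordProd_append] at heq
    refine Or.inl ⟨j, hjκ, ?_⟩
    rw [← mul_assoc, ← mul_assoc, heq, mul_inv_cancel_right]
  · rw [eraseIdx_append_of_length_le hjκ, wordProd_append, wordProd_append, mul_assoc] at heq
    rw [length_append] at hj
    exact Or.inr ⟨j - κ.length, by omega, mul_left_cancel heq⟩

theorem simple_mem_standardParabolic {X : Set B} {i : B} (hi : i ∈ X) :
    s i ∈ cs.standardParabolic X :=
  Subgroup.subset_closure (Set.mem_image_of_mem _ hi)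

theorem wordProd_mem_standardParabolic {X : Set B} {ω : List B} (hω : ∀ i ∈ ω, i ∈ X) :
    π ω ∈ cs.standardParabolic X :=
  list_prod_mem <| forall_mem_map.mpr fun i hi => cs.simple_mem_standardParabolic (hω i hi)

theorem standardParabolic_mono {X X' : Set B} (h : X ⊆ X') :
    cs.standardParabolic X ≤ cs.standardParabolic X' :=
  Subgroup.closure_mono (Set.image_mono h)

theorem exists_isReduced_wordProd_mul_simple {X : Set B} {ω : List B} (hω : cs.IsReduced ω)
    (hωX : ∀ j ∈ ω, j ∈ X) {i : B} (hi : i ∈ X) :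
    ∃ ω', cs.IsReduced ω' ∧ (∀ j ∈ ω', j ∈ X) ∧ π ω * s i = π ω' := by
  rcases cs.length_mul_simple (π ω) i with h | h
  · refine ⟨ω ++ [i], ?_, by simpa [or_imp, forall_and] using ⟨hωX, hi⟩, by simp [wordProd_append]⟩
    rw [IsReduced, wordProd_append, wordProd_singleton, h, hω.eq, length_append, length_singleton]
  · obtain ⟨j, hj, heq⟩ :=
      cs.exists_wordProd_mul_eq_eraseIdx (ω := ω) ⟨cs.isReflection_simple i, by omega⟩
    refine ⟨ω.eraseIdx j, ?_, fun k hk => hωX k (mem_of_mem_eraseIdx hk), heq⟩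
    rw [IsReduced, ← heq, length_eraseIdx_of_lt hj, ← hω.eq]
    omega

theorem exists_isReduced_of_mem_standardParabolic {X : Set B} {w : W}
    (hw : w ∈ cs.standardParabolic X) : ∃ ω, cs.IsReduced ω ∧ (∀ i ∈ ω, i ∈ X) ∧ w = π ω := by
  induction hw using Subgroup.closure_induction_right with
  | one => exact ⟨[], by simp [IsReduced], by simp, rfl⟩
  | mul_right _ _ _ hx ih =>
    obtain ⟨i, hi, rfl⟩ := hx
    obtain ⟨ω, hω, hωX, rfl⟩ := ih
    exact cs.exists_isReduced_wordProd_mul_simple hω hωX hi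
  | mul_inv_cancel _ _ _ hx ih =>
    obtain ⟨i, hi, rfl⟩ := hx
    obtain ⟨ω, hω, hωX, rfl⟩ := ih
    rw [inv_simple]
    exact cs.exists_isReduced_wordProd_mul_simple hω hωX hi

variable {cs} in
theorem IsReduced.of_append_left {ω ω' : List B} (h : cs.IsReduced (ω ++ ω')) :
    cs.IsReduced ω := by
  simpa using h.take ω.length

theorem length_mul_parabolic {Y : Set B} {w : W}
    (hmin : ∀ u ∈ cs.standardParabolic Y, ℓ w ≤ ℓ (w * u)) {u : W}
    (hu : u ∈ cs.standardParabolic Y) : ℓ (w * u) = ℓ w + ℓ u := by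
  obtain ⟨υ, hυ, hυY, rfl⟩ := cs.exists_isReduced_of_mem_standardParabolic hu
  rw [hυ.eq]
  clear hu
  induction υ using List.reverseRecOn with
  | nil => simp
  | append_singleton υ y ih =>
    have hy : y ∈ Y := hυY y (by simp)
    have hυY' : ∀ i ∈ υ, i ∈ Y := fun i hi => hυY i (mem_append_left _ hi)
    have ih := ih hυ.of_append_left hυY'
    rw [wordProd_append, wordProd_singleton, ← mul_assoc, length_append, length_singleton]
    rcases cs.length_mul_simple (w * π υ) y with h | h
    · omega
    exfalso
    obtain ⟨κ, hκ, rfl⟩ := cs.exists_isReduced w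
    rcases cs.exists_eraseIdx_of_isRightInversion_wordProd_mul (κ := κ) (υ := υ)
      ⟨cs.isReflection_simple y, by omega⟩ with ⟨j, hj, heq⟩ | ⟨j, hj, heq⟩
    · have hυmem : π υ ∈ cs.standardParabolic Y := cs.wordProd_mem_standardParabolic hυY'
      have := hmin _ (mul_mem (mul_mem hυmem (cs.simple_mem_standardParabolic hy)) (inv_mem hυmem))
      rw [heq, hκ.eq] at this
      exact (cs.length_wordProd_eraseIdx_lt hj).not_ge this
    · have := cs.length_wordProd_eraseIdx_lt hj
      rw [← heq, ← wordProd_singleton, ← wordProd_append, hυ.eq, length_append] at this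
      simp at this

theorem length_parabolic_mul {X : Set B} {w : W}
    (hmin : ∀ v ∈ cs.standardParabolic X, ℓ w ≤ ℓ (v * w)) {v : W}
    (hv : v ∈ cs.standardParabolic X) : ℓ (v * w) = ℓ v + ℓ w := by
  have hmin' : ∀ u ∈ cs.standardParabolic X, ℓ w⁻¹ ≤ ℓ (w⁻¹ * u) := fun u hu => by
    rw [length_inv, ← length_inv cs (w⁻¹ * u), mul_inv_rev, inv_inv]
    exact hmin u⁻¹ (inv_mem hu)
  have := cs.length_mul_parabolic hmin' (inv_mem hv)
  rw [← mul_inv_rev, length_inv, length_inv, length_inv] at this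
  omega

theorem exists_mem_eq_simple_of_length_eq_one {X : Set B} {t : W}
    (ht : t ∈ cs.standardParabolic X) (h : ℓ t = 1) : ∃ x ∈ X, t = s x := by
  obtain ⟨ρ, hρ, hρX, rfl⟩ := cs.exists_isReduced_of_mem_standardParabolic ht
  obtain ⟨x, rfl⟩ := List.length_eq_one_iff.mp (hρ.eq ▸ h)
  exact ⟨x, hρX x (mem_singleton_self x), wordProd_singleton cs x⟩

section DoubleCosetMinimal

variable {X Y : Set B} {w : W}
  (hL : ∀ v ∈ cs.standardParabolic X, cs.length w ≤ cs.length (v * w))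
  (hR : ∀ u ∈ cs.standardParabolic Y, cs.length w ≤ cs.length (w * u))
include hL hR

theorem exists_mem_conj_simple_eq_simple {υ : List B} {y : B} (hυ : cs.IsReduced (υ ++ [y]))
    (hυY : ∀ i ∈ υ ++ [y], i ∈ Y) (hX : w * π (υ ++ [y]) * w⁻¹ ∈ cs.standardParabolic X) :
    ∃ x ∈ X, w * s y * w⁻¹ = s x := by
  have hy : y ∈ Y := hυY y (by simp)
  obtain ⟨κ, -, hκX, hκ⟩ := cs.exists_isReduced_of_mem_standardParabolic hX
  obtain ⟨ξ, hξ, rfl⟩ := cs.exists_isReduced (w := w)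
  have hwu : π κ * π ξ = π ξ * π (υ ++ [y]) := by rw [← hκ]; group
  have hυY' : ∀ i ∈ υ, i ∈ Y := fun i hi => hυY i (mem_append_left _ hi)
  have hinv : cs.IsRightInversion (π κ * π ξ) (s y) := by
    refine ⟨cs.isReflection_simple y, ?_⟩
    calc ℓ (π κ * π ξ * s y) = ℓ (π ξ * π υ) := by
          rw [hwu, wordProd_append, wordProd_singleton, ← mul_assoc,
            simple_mul_simple_cancel_right]
      _ = ℓ (π ξ) + υ.length := by
          rw [cs.length_mul_parabolic hR (cs.wordProd_mem_standardParabolic hυY'),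
            hυ.of_append_left.eq]
      _ < ℓ (π ξ) + (υ ++ [y]).length := by simp
      _ = ℓ (π κ * π ξ) := by
          rw [hwu, cs.length_mul_parabolic hR (cs.wordProd_mem_standardParabolic hυY), hυ.eq]
  rcases cs.exists_eraseIdx_of_isRightInversion_wordProd_mul hinv with ⟨j, hj, heq⟩ | ⟨j, hj, heq⟩
  · have htX : π ξ * s y * (π ξ)⁻¹ ∈ cs.standardParabolic X := by
      rw [← inv_mul_cancel_left (π κ) (π ξ * s y * (π ξ)⁻¹), heq]
      exact mul_mem (inv_mem (hκ ▸ hX)) (cs.wordProd_mem_standardParabolic fun i hi =>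
        hκX i (mem_of_mem_eraseIdx hi))
    refine cs.exists_mem_eq_simple_of_length_eq_one htX ?_
    have h := cs.length_parabolic_mul hL htX
    rw [inv_mul_cancel_right, cs.length_mul_parabolic hR (cs.simple_mem_standardParabolic hy),
      length_simple] at h
    omega
  · have h := hR _ (cs.simple_mem_standardParabolic hy)
    rw [heq, hξ.eq] at h
    exact absurd h (cs.length_wordProd_eraseIdx_lt hj).not_ge

theorem conj_mem_standardParabolic_of_conj_mem {u : W} (hu : u ∈ cs.standardParabolic Y)
    (hX : w * u * w⁻¹ ∈ cs.standardParabolic X) :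
    w * u * w⁻¹ ∈
      cs.standardParabolic (X ∩ cs.simple ⁻¹' ((fun t => w * t * w⁻¹) '' (cs.simple '' Y))) := by
  obtain ⟨υ, hυ, hυY, rfl⟩ := cs.exists_isReduced_of_mem_standardParabolic hu
  clear hu
  induction υ using List.reverseRecOn with
  | nil => simp [one_mem]
  | append_singleton υ y ih =>
    obtain ⟨x, hx, hxy⟩ := cs.exists_mem_conj_simple_eq_simple hL hR hυ hυY hX
    have hsplit : w * π (υ ++ [y]) * w⁻¹ = w * π υ * w⁻¹ * s x := by
      rw [← hxy, wordProd_append, wordProd_singleton]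
      group
    have hυX : w * π υ * w⁻¹ ∈ cs.standardParabolic X := by
      rw [← cs.simple_mul_simple_cancel_right (w := w * π υ * w⁻¹) x, ← hsplit]
      exact mul_mem hX (cs.simple_mem_standardParabolic hx)
    rw [hsplit]
    exact mul_mem (ih hυ.of_append_left (fun i hi => hυY i (mem_append_left _ hi)) hυX)
      (cs.simple_mem_standardParabolic ⟨hx, s y, ⟨y, hυY y (by simp), rfl⟩, hxy⟩)

end DoubleCosetMinimal

end CoxeterSystem

/-- If `w` is `(X,Y)`-reduced, then `w·W_Y·w⁻¹ ∩ W_X` is a standard parabolic subgroup: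
there exist `X₁ ⊆ X` and `Y₁ ⊆ Y` with `w·S_{Y₁}·w⁻¹ = w·S_Y·w⁻¹ ∩ S_X = S_{X₁}` and
`w·W_Y·w⁻¹ ∩ W_X = W_{X₁} = w·W_{Y₁}·w⁻¹`. -/
theorem conj_parabolic_inter_parabolic_of_reduced {B W : Type*} [Group W] {M : CoxeterMatrix B}
    (cs : CoxeterSystem M W) (X Y : Set B) (w : W)
    (hw : ∀ x ∈ cs.standardParabolic X, ∀ y ∈ cs.standardParabolic Y,
      cs.length w ≤ cs.length (x * w * y)) :
    ∃ X₁ ⊆ X, ∃ Y₁ ⊆ Y,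
      (fun t => w * t * w⁻¹) '' (cs.simple '' Y₁) =
        ((fun t => w * t * w⁻¹) '' (cs.simple '' Y)) ∩ (cs.simple '' X) ∧
      (fun t => w * t * w⁻¹) '' (cs.simple '' Y₁) = cs.simple '' X₁ ∧
      (cs.standardParabolic Y).map (MulAut.conj w).toMonoidHom ⊓ cs.standardParabolic X =
        cs.standardParabolic X₁ ∧
      (cs.standardParabolic Y₁).map (MulAut.conj w).toMonoidHom = cs.standardParabolic X₁ := by
  have hL : ∀ v ∈ cs.standardParabolic X, cs.length w ≤ cs.length (v * w) := fun v hv => by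
    simpa using hw v hv 1 (one_mem _)
  have hR : ∀ u ∈ cs.standardParabolic Y, cs.length w ≤ cs.length (w * u) := fun u hu => by
    simpa using hw 1 (one_mem _) u hu
  set conj : W → W := fun t => w * t * w⁻¹
  set X₁ := X ∩ cs.simple ⁻¹' (conj '' (cs.simple '' Y))
  set Y₁ := Y ∩ (conj ∘ cs.simple) ⁻¹' (cs.simple '' X)
  have hY₁ : conj '' (cs.simple '' Y₁) = conj '' (cs.simple '' Y) ∩ cs.simple '' X := by
    rw [← Set.image_comp, Set.image_inter_preimage, Set.image_comp]
  have hX₁ : conj '' (cs.simple '' Y₁) = cs.simple '' X₁ := by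
    rw [hY₁, Set.image_inter_preimage, Set.inter_comm]
  have hmap : (cs.standardParabolic Y₁).map (MulAut.conj w).toMonoidHom =
      cs.standardParabolic X₁ := by
    rw [CoxeterSystem.standardParabolic, MonoidHom.map_closure]
    exact congrArg Subgroup.closure hX₁
  refine ⟨X₁, Set.inter_subset_left, Y₁, Set.inter_subset_left, hY₁, hX₁, le_antisymm ?_ ?_, hmap⟩
  · rintro _ ⟨⟨u, hu, rfl⟩, hX⟩
    exact cs.conj_mem_standardParabolic_of_conj_mem hL hR hu hX
  · exact le_inf (hmap ▸ Subgroup.map_mono (cs.standardParabolic_mono Set.inter_subset_left))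
      (cs.standardParabolic_mono Set.inter_subset_left)
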